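/- Let q be a prime power, m ≥ 0, and α a composition of n. Then the power series C_{α,m}(t) ∈ ℤ[[t]] is a monic polynomial of degree n(q^m−1): its coefficient of t^{n(q^m−1)} equals 1, and its coefficient of t^d equals 0 for every d > n(q^m−1). -/

import Mathlib

/-!
Each summand `t^{e(m,α,β)} [m; β, m−|β|]_{q,t}` is a polynomial. Since
`t^N − 1 = ∏_{r ∣ N} Φ_r(t)`, the product of the denominator factors `1 − t^b` divides the product
of the numerator factors `1 − t^a` as soon as, for every `r`, at most as many denominator exponents
as numerator exponents are divisible by `r`. For a prime power `q` there are `k₀` and `d`, depending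
on `r`, such that `r ∣ q^c − q^k` (for `k < c`) exactly when `k ≥ k₀` and `d ∣ c − k`; within each
block of the denominator the residue class of the block's right end is the sparsest one, which
gives the count. The summand then has degree `Σᵢ αᵢ (q^m − q^{Bᵢ}) ≤ n (q^m − 1)`, with equality
only for `β = 0`, whose summand is exactly `t^{n(q^m−1)}`.
-/

open Finset PowerSeries

/-- Partial sums: `psum f i = f 0 + f 1 + ⋯ + f (i-1)`. -/
def psum (f : ℕ → ℕ) (i : ℕ) : ℕ := ∑ j ∈ Finset.range i, f j

/-- The `(q,t)`-multinomial `[m; β, m−|β|]_{q,t}` as a power series in `ℚ[[t]]`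
(for a weak composition `β` of length `ℓ`). -/
noncomputable def qtMult (q m ℓ : ℕ) (β : ℕ → ℕ) : PowerSeries ℚ :=
  (∏ j ∈ Finset.range (psum β ℓ),
      (1 - (PowerSeries.X : PowerSeries ℚ) ^ (q ^ m - q ^ j))) *
    ∏ i ∈ Finset.range ℓ, ∏ j ∈ Finset.range (β i),
      (1 - (PowerSeries.X : PowerSeries ℚ) ^ (q ^ psum β (i + 1) - q ^ (psum β i + j)))⁻¹

/-- The exponent `e(m,α,β) = Σᵢ (αᵢ − βᵢ)(q^m − q^{Bᵢ})`. -/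
def eexp (q m ℓ : ℕ) (α β : ℕ → ℕ) : ℕ :=
  ∑ i ∈ Finset.range ℓ, (α i - β i) * (q ^ m - q ^ psum β (i + 1))

/-- Extend a tuple `β : Fin ℓ → ℕ` to a function `ℕ → ℕ` by zero. -/
def extfn (ℓ : ℕ) (β : Fin ℓ → ℕ) : ℕ → ℕ := fun i => if h : i < ℓ then β ⟨i, h⟩ else 0

/-- `C_{α,m}(t) = Σ_{β ≤ α, |β| ≤ m} t^{e(m,α,β)} [m; β, m−|β|]_{q,t}`. -/
noncomputable def Cser (q m ℓ : ℕ) (α : ℕ → ℕ) : PowerSeries ℚ :=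
  ∑ β ∈ (Finset.Icc (0 : Fin ℓ → ℕ) fun i => α i).filter fun β => ∑ i, β i ≤ m,
    (PowerSeries.X : PowerSeries ℚ) ^ eexp q m ℓ α (extfn ℓ β) * qtMult q m ℓ (extfn ℓ β)

open scoped Polynomial

theorem psum_succ (f : ℕ → ℕ) (i : ℕ) : psum f (i + 1) = psum f i + f i :=
  sum_range_succ f i

theorem psum_mono (f : ℕ → ℕ) : Monotone (psum f) :=
  monotone_nat_of_le_succ fun i => by rw [psum_succ]; omega

theorem sum_range_psum {M : Type*} [AddCommMonoid M] (f : ℕ → M) (β : ℕ → ℕ) (ℓ : ℕ) :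
    ∑ j ∈ range (psum β ℓ), f j = ∑ i ∈ range ℓ, ∑ j ∈ range (β i), f (psum β i + j) := by
  induction ℓ with
  | zero => simp [psum]
  | succ ℓ ih => rw [sum_range_succ, ← ih, psum_succ, sum_range_add]

theorem exists_dvd_pow_iff_le {a q N : ℕ} (h : a ∣ q ^ N) : ∃ k₀, ∀ k, a ∣ q ^ k ↔ k₀ ≤ k := by
  classical
  have hex : ∃ k, a ∣ q ^ k := ⟨N, h⟩
  exact ⟨Nat.find hex, fun k =>
    ⟨Nat.find_min' hex, fun hk => (Nat.find_spec hex).trans (pow_dvd_pow q hk)⟩⟩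

theorem exists_dvd_pow_sub_one_iff {q r : ℕ} (hq : 0 < q) (h : q.Coprime r) :
    ∃ d, ∀ t, r ∣ q ^ t - 1 ↔ d ∣ t := by
  refine ⟨orderOf (ZMod.unitOfCoprime q h), fun t => ?_⟩
  rw [orderOf_dvd_iff_pow_eq_one, ← Units.val_inj, Units.val_pow_eq_pow_val,
    ZMod.coe_unitOfCoprime, Units.val_one, ← Nat.cast_pow, ← Nat.cast_one (R := ZMod r), eq_comm,
    ZMod.natCast_eq_natCast_iff, Nat.modEq_iff_dvd' (Nat.one_le_pow _ _ hq)]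

theorem IsPrimePow.exists_dvd_pow_sub_pow_iff {q r : ℕ} (hq : IsPrimePow q) (hr : r ≠ 0) :
    ∃ k₀ d : ℕ, ∀ ⦃k c : ℕ⦄, k < c → (r ∣ q ^ c - q ^ k ↔ k₀ ≤ k ∧ d ∣ c - k) := by
  obtain ⟨p, e, hp, he, rfl⟩ := hq
  rw [← Nat.prime_iff] at hp
  -- split `r` into its `p`-part `p ^ a`, which only sees `q ^ k`, and a part coprime to `q`
  set a := r.factorization p
  have hpr₀ : p.Coprime (r / p ^ a) := Nat.coprime_ordCompl hp hr
  obtain ⟨k₀, hk₀⟩ := exists_dvd_pow_iff_le (q := p ^ e) (N := a) (a := p ^ a)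
    (by rw [← pow_mul]; exact pow_dvd_pow p (Nat.le_mul_of_pos_left a he))
  obtain ⟨d, hd⟩ := exists_dvd_pow_sub_one_iff (pow_pos hp.pos e) (hpr₀.pow_left e)
  refine ⟨k₀, d, fun k c hkc => ?_⟩
  obtain ⟨t, rfl⟩ := Nat.exists_eq_add_of_lt hkc
  have hsplit : (p ^ e) ^ (k + t + 1) - (p ^ e) ^ k = (p ^ e) ^ k * ((p ^ e) ^ (t + 1) - 1) := by
    rw [Nat.mul_sub, ← pow_add, mul_one, add_assoc]
  have hcop : (p ^ a).Coprime ((p ^ e) ^ (t + 1) - 1) := by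
    have hq₁ : 1 ≤ (p ^ e) ^ (t + 1) := Nat.one_le_pow _ _ (pow_pos hp.pos e)
    refine Nat.Coprime.pow_left _ (Nat.Coprime.coprime_dvd_left ?_
      ((Nat.coprime_self_sub_right hq₁).2 (Nat.coprime_one_right _)))
    exact (dvd_pow_self p he.ne').trans (dvd_pow_self _ t.succ_ne_zero)
  rw [hsplit, ← Nat.ordProj_mul_ordCompl_eq_self r p, show k + t + 1 - k = t + 1 by omega, ← hk₀,
    ← hd, ← hcop.dvd_mul_right (m := (p ^ e) ^ k),
    ← ((hpr₀.pow_left e).pow_left k).symm.dvd_mul_left (n := (p ^ e) ^ (t + 1) - 1)]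
  exact ⟨fun h => ⟨dvd_of_mul_right_dvd h, dvd_of_mul_left_dvd h⟩,
    fun h => (hpr₀.pow_left a).mul_dvd_of_dvd_of_dvd h.1 h.2⟩

theorem card_filter_dvd_sub_le {a b c d k₀ : ℕ} (hc : a + b ≤ c) :
    #{j ∈ range b | k₀ ≤ a + j ∧ d ∣ b - j} ≤ #{j ∈ range b | k₀ ≤ a + j ∧ d ∣ c - (a + j)} := by
  -- shifting by `s` moves the residue class of `b` onto that of `c - a`, without leaving `range b`
  set s := (c - (a + b)) % d
  have hdiv := Nat.div_add_mod (c - (a + b)) d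
  refine card_le_card_of_injOn (· + s) (fun j hj => ?_) (fun i _ j _ h => by simpa using h)
  simp only [coe_filter, mem_range, Set.mem_ofPred_eq] at hj ⊢
  obtain ⟨hjb, hk₀, hdvd⟩ := hj
  have hd : d ≤ b - j := Nat.le_of_dvd (by omega) hdvd
  have hs : s < d := Nat.mod_lt _ (Nat.pos_of_dvd_of_pos hdvd (by omega))
  refine ⟨by omega, by omega, ?_⟩
  rw [show c - (a + (j + s)) = d * ((c - (a + b)) / d) + (b - j) by omega]
  exact dvd_add (dvd_mul_right _ _) hdvd

theorem sum_card_filter_dvd_pow_sub_pow_le {q r m ℓ : ℕ} (hq : IsPrimePow q) (hr : r ≠ 0)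
    {β : ℕ → ℕ} (hm : psum β ℓ ≤ m) :
    ∑ i ∈ range ℓ, #{j ∈ range (β i) | r ∣ q ^ psum β (i + 1) - q ^ (psum β i + j)}
      ≤ #{j ∈ range (psum β ℓ) | r ∣ q ^ m - q ^ j} := by
  obtain ⟨k₀, d, hchar⟩ := hq.exists_dvd_pow_sub_pow_iff hr
  calc ∑ i ∈ range ℓ, #{j ∈ range (β i) | r ∣ q ^ psum β (i + 1) - q ^ (psum β i + j)}
      = ∑ i ∈ range ℓ, #{j ∈ range (β i) | k₀ ≤ psum β i + j ∧ d ∣ β i - j} := by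
        refine sum_congr rfl fun i _ => congrArg card (filter_congr fun j hj => ?_)
        rw [mem_range] at hj
        rw [hchar (by rw [psum_succ]; omega), psum_succ,
          show psum β i + β i - (psum β i + j) = β i - j by omega]
    _ ≤ ∑ i ∈ range ℓ, #{j ∈ range (β i) | k₀ ≤ psum β i + j ∧ d ∣ m - (psum β i + j)} := by
        refine sum_le_sum fun i hi => ?_
        refine card_filter_dvd_sub_le ((le_of_eq (psum_succ β i).symm).trans ?_)
        exact (psum_mono β (by simpa using hi)).trans hm
    _ = #{j ∈ range (psum β ℓ) | k₀ ≤ j ∧ d ∣ m - j} := by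
        simp only [card_filter]
        exact (sum_range_psum (fun j => if k₀ ≤ j ∧ d ∣ m - j then 1 else 0) β ℓ).symm
    _ = #{j ∈ range (psum β ℓ) | r ∣ q ^ m - q ^ j} := by
        refine congrArg card (filter_congr fun j hj => (hchar ?_).symm)
        rw [mem_range] at hj
        omega

theorem Nat.count_bind_divisors {ι : Type*} (r : ℕ) {s : Finset ι} {a : ι → ℕ}
    (ha : ∀ i ∈ s, a i ≠ 0) :
    (s.val.bind fun i => (a i).divisors.val).count r = #{i ∈ s | r ∣ a i} := by
  rw [Multiset.count_bind, card_filter]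
  exact sum_congr rfl fun i hi => by
    simp [Multiset.count_eq_of_nodup (a i).divisors.nodup, ha i hi]

namespace Polynomial

variable {R ι κ : Type*} [CommRing R]

theorem prod_X_pow_sub_one_eq_prod_cyclotomic {s : Finset ι} {a : ι → ℕ}
    (ha : ∀ i ∈ s, a i ≠ 0) :
    ∏ i ∈ s, (X ^ a i - 1 : R[X])
      = ((s.val.bind fun i => (a i).divisors.val).map (cyclotomic · R)).prod := by
  rw [Multiset.map_bind, Multiset.prod_bind]
  exact prod_congr rfl fun i hi =>
    (prod_cyclotomic_eq_X_pow_sub_one (Nat.pos_of_ne_zero (ha i hi)) R).symm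

theorem prod_one_sub_X_pow_dvd_prod {s : Finset ι} {t : Finset κ} {a : ι → ℕ} {b : κ → ℕ}
    (ha : ∀ i ∈ s, a i ≠ 0) (hb : ∀ k ∈ t, b k ≠ 0)
    (h : ∀ r ≠ 0, #{k ∈ t | r ∣ b k} ≤ #{i ∈ s | r ∣ a i}) :
    ∏ k ∈ t, (1 - X ^ b k : R[X]) ∣ ∏ i ∈ s, (1 - X ^ a i) := by
  have hdvd : ∏ k ∈ t, (X ^ b k - 1 : R[X]) ∣ ∏ i ∈ s, (X ^ a i - 1) := by
    rw [prod_X_pow_sub_one_eq_prod_cyclotomic ha, prod_X_pow_sub_one_eq_prod_cyclotomic hb]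
    refine Multiset.prod_dvd_prod_of_le (Multiset.map_le_map (Multiset.le_iff_count.2 fun r => ?_))
    rw [Nat.count_bind_divisors r ha, Nat.count_bind_divisors r hb]
    rcases eq_or_ne r 0 with rfl | hr
    · simp [filter_false_of_mem hb]
    · exact h r hr
  simp_rw [← neg_sub (X ^ _ : R[X]) 1, prod_neg]
  exact (isUnit_neg_one.pow _).mul_left_dvd.2 (dvd_mul_of_dvd_right hdvd _)

theorem natDegree_one_sub_X_pow [Nontrivial R] (n : ℕ) : (1 - X ^ n : R[X]).natDegree = n := by
  rw [← neg_sub, natDegree_neg, ← C_1, natDegree_X_pow_sub_C]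

theorem one_sub_X_pow_ne_zero [Nontrivial R] {n : ℕ} (hn : n ≠ 0) : (1 - X ^ n : R[X]) ≠ 0 :=
  ne_zero_of_natDegree_gt (n := 0) (by rw [natDegree_one_sub_X_pow]; omega)

theorem natDegree_prod_one_sub_X_pow [IsDomain R] {s : Finset ι} {a : ι → ℕ}
    (ha : ∀ i ∈ s, a i ≠ 0) : (∏ i ∈ s, (1 - X ^ a i : R[X])).natDegree = ∑ i ∈ s, a i := by
  rw [natDegree_prod _ _ fun i hi => one_sub_X_pow_ne_zero (ha i hi)]
  simp only [natDegree_one_sub_X_pow]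

theorem coe_prod_one_sub_X_pow (s : Finset ι) (a : ι → ℕ) :
    ((∏ i ∈ s, (1 - X ^ a i : R[X]) : R[X]) : R⟦X⟧) = ∏ i ∈ s, (1 - PowerSeries.X ^ a i) := by
  rw [← coeToPowerSeries.ringHom_apply, map_prod]
  simp

end Polynomial

theorem PowerSeries.prod_one_sub_X_pow_mul_prod_inv_eq_coe {k ι κ : Type*} [Field k]
    {s : Finset ι} {t : Finset κ} {a : ι → ℕ} {b : κ → ℕ}
    (ha : ∀ i ∈ s, a i ≠ 0) (hb : ∀ j ∈ t, b j ≠ 0)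
    (h : ∏ j ∈ t, (1 - Polynomial.X ^ b j : k[X]) ∣ ∏ i ∈ s, (1 - Polynomial.X ^ a i)) :
    ∃ Q : k[X], (∏ i ∈ s, (1 - X ^ a i : k⟦X⟧)) * ∏ j ∈ t, (1 - X ^ b j)⁻¹ = Q ∧
      Q.natDegree + ∑ j ∈ t, b j = ∑ i ∈ s, a i := by
  obtain ⟨Q, hQ⟩ := h
  have hinv : (∏ j ∈ t, (1 - X ^ b j : k⟦X⟧)) * ∏ j ∈ t, (1 - X ^ b j)⁻¹ = 1 := by
    rw [← prod_mul_distrib]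
    exact prod_eq_one fun j hj => PowerSeries.mul_inv_cancel _ (by simp [hb j hj])
  refine ⟨Q, ?_, ?_⟩
  · rw [← Polynomial.coe_prod_one_sub_X_pow s a, hQ, Polynomial.coe_mul,
      Polynomial.coe_prod_one_sub_X_pow, mul_right_comm, hinv, one_mul]
  · have hA := prod_ne_zero_iff.2 fun i hi => Polynomial.one_sub_X_pow_ne_zero (R := k) (ha i hi)
    rw [hQ] at hA
    have hdeg := congrArg Polynomial.natDegree hQ
    rw [Polynomial.natDegree_mul (left_ne_zero_of_mul hA) (right_ne_zero_of_mul hA),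
      Polynomial.natDegree_prod_one_sub_X_pow ha,
      Polynomial.natDegree_prod_one_sub_X_pow hb] at hdeg
    omega

theorem qtMult_eq_coe {q m ℓ : ℕ} (hq : IsPrimePow q) {β : ℕ → ℕ} (hm : psum β ℓ ≤ m) :
    ∃ Q : ℚ[X], qtMult q m ℓ β = Q ∧
      Q.natDegree + ∑ i ∈ range ℓ, ∑ j ∈ range (β i), (q ^ psum β (i + 1) - q ^ (psum β i + j))
        = ∑ j ∈ range (psum β ℓ), (q ^ m - q ^ j) := by
  have ha : ∀ j ∈ range (psum β ℓ), q ^ m - q ^ j ≠ 0 := fun j hj => by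
    have := Nat.pow_lt_pow_right hq.one_lt ((mem_range.1 hj).trans_le hm)
    omega
  have hb : ∀ x ∈ (range ℓ).sigma fun i => range (β i),
      q ^ psum β (x.1 + 1) - q ^ (psum β x.1 + x.2) ≠ 0 := by
    intro x hx
    rw [mem_sigma, mem_range, mem_range] at hx
    have := Nat.pow_lt_pow_right hq.one_lt (show psum β x.1 + x.2 < psum β (x.1 + 1) by
      rw [psum_succ]; omega)
    omega
  have hcount : ∀ r ≠ 0, #{x ∈ (range ℓ).sigma (fun i => range (β i)) |
      r ∣ q ^ psum β (x.1 + 1) - q ^ (psum β x.1 + x.2)}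
        ≤ #{j ∈ range (psum β ℓ) | r ∣ q ^ m - q ^ j} := fun r hr => by
    simpa only [card_filter, sum_sigma] using sum_card_filter_dvd_pow_sub_pow_le hq hr hm
  rw [qtMult, prod_sigma', sum_sigma']
  exact PowerSeries.prod_one_sub_X_pow_mul_prod_inv_eq_coe ha hb
    (Polynomial.prod_one_sub_X_pow_dvd_prod ha hb hcount)

theorem eexp_add_sum_sub_pow {q m ℓ : ℕ} (hq : 0 < q) {α β : ℕ → ℕ} (hβ : ∀ i < ℓ, β i ≤ α i)
    (hm : psum β ℓ ≤ m) :
    eexp q m ℓ α β + ∑ j ∈ range (psum β ℓ), (q ^ m - q ^ j)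
      = ∑ i ∈ range ℓ, α i * (q ^ m - q ^ psum β (i + 1))
        + ∑ i ∈ range ℓ, ∑ j ∈ range (β i), (q ^ psum β (i + 1) - q ^ (psum β i + j)) := by
  rw [sum_range_psum, eexp, ← sum_add_distrib, ← sum_add_distrib]
  refine sum_congr rfl fun i hi => ?_
  rw [mem_range] at hi
  have hle : q ^ psum β (i + 1) ≤ q ^ m :=
    Nat.pow_le_pow_right hq ((psum_mono β (by omega)).trans hm)
  have hsplit : ∑ j ∈ range (β i), (q ^ m - q ^ (psum β i + j))
      = ∑ j ∈ range (β i), ((q ^ m - q ^ psum β (i + 1))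
        + (q ^ psum β (i + 1) - q ^ (psum β i + j))) := by
    refine sum_congr rfl fun j hj => ?_
    have : q ^ (psum β i + j) ≤ q ^ psum β (i + 1) :=
      Nat.pow_le_pow_right hq (by rw [psum_succ]; have := mem_range.1 hj; omega)
    omega
  rw [hsplit, sum_add_distrib, sum_const, card_range, smul_eq_mul, ← add_assoc, ← add_mul,
    Nat.sub_add_cancel (hβ i hi)]

theorem sum_mul_sub_pow_psum_le {q m ℓ : ℕ} (hq : 0 < q) (α β : ℕ → ℕ) :
    ∑ i ∈ range ℓ, α i * (q ^ m - q ^ psum β (i + 1)) ≤ (∑ i ∈ range ℓ, α i) * (q ^ m - 1) := by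
  rw [sum_mul]
  exact sum_le_sum fun i _ => Nat.mul_le_mul_left _ (Nat.sub_le_sub_left (Nat.one_le_pow _ _ hq) _)

theorem sum_mul_sub_pow_psum_lt {q m ℓ : ℕ} (hq : 1 < q) {α β : ℕ → ℕ}
    (hβ : ∀ i < ℓ, β i ≤ α i) (hm : psum β ℓ ≤ m) (hne : ∃ i < ℓ, β i ≠ 0) :
    ∑ i ∈ range ℓ, α i * (q ^ m - q ^ psum β (i + 1)) < (∑ i ∈ range ℓ, α i) * (q ^ m - 1) := by
  obtain ⟨i, hi, hβi⟩ := hne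
  rw [sum_mul]
  refine sum_lt_sum (fun j _ => Nat.mul_le_mul_left _
    (Nat.sub_le_sub_left (Nat.one_le_pow _ _ (by omega)) _)) ⟨i, mem_range.2 hi, ?_⟩
  have h1 : 1 < q ^ psum β (i + 1) := Nat.one_lt_pow (by rw [psum_succ]; omega) hq
  have h2 : q ^ psum β (i + 1) ≤ q ^ m :=
    Nat.pow_le_pow_right (by omega) ((psum_mono β hi).trans hm)
  exact Nat.mul_lt_mul_of_pos_left (by omega) (by have := hβ i hi; omega)

theorem coeff_X_pow_eexp_mul_qtMult_eq_zero {q m ℓ d : ℕ} (hq : IsPrimePow q) {α β : ℕ → ℕ}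
    (hβ : ∀ i < ℓ, β i ≤ α i) (hm : psum β ℓ ≤ m)
    (hd : ∑ i ∈ range ℓ, α i * (q ^ m - q ^ psum β (i + 1)) < d) :
    coeff d (X ^ eexp q m ℓ α β * qtMult q m ℓ β) = 0 := by
  obtain ⟨Q, hQ, hdeg⟩ := qtMult_eq_coe hq hm
  have := eexp_add_sum_sub_pow hq.pos hβ hm
  rw [hQ, coeff_X_pow_mul', if_pos (by omega), Polynomial.coeff_coe,
    Polynomial.coeff_eq_zero_of_natDegree_lt (by omega)]

theorem extfn_coe {ℓ : ℕ} (β : Fin ℓ → ℕ) (i : Fin ℓ) : extfn ℓ β i = β i := by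
  simp [extfn]

theorem extfn_zero (ℓ : ℕ) : extfn ℓ 0 = 0 := by
  ext i
  simp [extfn]

theorem psum_extfn {ℓ : ℕ} (β : Fin ℓ → ℕ) : psum (extfn ℓ β) ℓ = ∑ i, β i := by
  simp only [psum, ← Fin.sum_univ_eq_sum_range, extfn_coe]

theorem extfn_le_and_psum_le_of_mem {ℓ m : ℕ} {α : ℕ → ℕ} {β : Fin ℓ → ℕ}
    (hβ : β ∈ (Icc (0 : Fin ℓ → ℕ) fun i => α i).filter fun β => ∑ i, β i ≤ m) :
    (∀ i < ℓ, extfn ℓ β i ≤ α i) ∧ psum (extfn ℓ β) ℓ ≤ m := by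
  rw [mem_filter, mem_Icc] at hβ
  exact ⟨fun i hi => by simpa [extfn, hi] using hβ.1.2 ⟨i, hi⟩, psum_extfn β ▸ hβ.2⟩

theorem statement3_general (q m ℓ n : ℕ) (hq : IsPrimePow q) (α : ℕ → ℕ)
    (hsum : ∑ i ∈ Finset.range ℓ, α i = n) :
    PowerSeries.coeff (n * (q ^ m - 1)) (Cser q m ℓ α) = 1 ∧
    ∀ d, n * (q ^ m - 1) < d → PowerSeries.coeff d (Cser q m ℓ α) = 0 := by
  subst hsum
  refine ⟨?_, fun d hd => ?_⟩
  · have hzero : (0 : Fin ℓ → ℕ) ∈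
        (Icc (0 : Fin ℓ → ℕ) fun i => α i).filter fun β => ∑ i, β i ≤ m := by
      simp [mem_filter, mem_Icc]
    rw [Cser, map_sum, sum_eq_single_of_mem 0 hzero fun β hβ hne => ?_]
    · simp [extfn_zero, eexp, qtMult, psum, sum_mul]
    · obtain ⟨hβα, hβm⟩ := extfn_le_and_psum_le_of_mem hβ
      refine coeff_X_pow_eexp_mul_qtMult_eq_zero hq hβα hβm
        (sum_mul_sub_pow_psum_lt hq.one_lt hβα hβm ?_)
      obtain ⟨i, hi⟩ := Function.ne_iff.1 hne
      exact ⟨i, i.isLt, by simpa [extfn_coe] using hi⟩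
  · rw [Cser, map_sum]
    refine sum_eq_zero fun β hβ => ?_
    obtain ⟨hβα, hβm⟩ := extfn_le_and_psum_le_of_mem hβ
    exact coeff_X_pow_eexp_mul_qtMult_eq_zero hq hβα hβm
      ((sum_mul_sub_pow_psum_le hq.pos α _).trans_lt hd)

/-- Proposition: for a prime power `q`, any `m ≥ 0` and any composition `α` of `n`, the power
series `C_{α,m}(t)` is a monic polynomial of degree `n(q^m − 1)`: its coefficient of
`t^{n(q^m−1)}` is `1` and all coefficients in higher degrees vanish. -/
theorem statement3 (q m ℓ n : ℕ) (hq : IsPrimePow q) (α : ℕ → ℕ)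
    (hpos : ∀ i < ℓ, 0 < α i) (hsum : ∑ i ∈ Finset.range ℓ, α i = n) :
    PowerSeries.coeff (n * (q ^ m - 1)) (Cser q m ℓ α) = 1 ∧
    ∀ d, n * (q ^ m - 1) < d → PowerSeries.coeff d (Cser q m ℓ α) = 0 :=
  statement3_general q m ℓ n hq α hsum
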